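/- arXiv:math/0608752 — 4 statements merged into one kernel-verified Lean document; each statement's English description precedes it below -/
import Mathlib

section
/- Every edge of the Farey graph separates it: for any two adjacent vertices u and v of 𝓕, the subgraph of 𝓕 induced on the vertex set V(𝓕) ∖ {u, v} is disconnected, i.e., there exist vertices a, b ∉ {u, v} such that every path in 𝓕 from a to b passes through u or v. -/
/-- The Farey graph has vertex set `ℚ ∪ {∞}`, encoded as `Option ℚ` with `none = ∞ = 1/0`.
Writing each vertex in lowest terms as `p/q` with `q ≥ 0` and `gcd(p,q) = 1`, two distinct
vertices `p/q` and `r/s` are adjacent iff `|p*s - r*q| = 1`. -/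
def fareyAdj : Option ℚ → Option ℚ → Prop
  | none, none => False
  | none, some r => r.den = 1
  | some p, none => p.den = 1
  | some p, some r => p ≠ r ∧ (p.num * (r.den : ℤ) - r.num * (p.den : ℤ)).natAbs = 1

/-- The Farey graph. -/
def fareyGraph : SimpleGraph (Option ℚ) where
  Adj := fareyAdj
  symm := by
    constructor
    rintro (_ | p) (_ | r) h
    · exact h.elim
    · exact h
    · exact h
    · exact ⟨Ne.symm h.1, by have := h.2; omega⟩
  loopless := by
    constructor
    rintro (_ | p) h
    · exact h.elim
    · exact h.1 rfl

/-- The vertex of the Farey graph represented by the fraction `p/q` (with `p/0 = ∞`). -/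
def fareyVertex (p q : ℤ) : Option ℚ :=
  if q = 0 then none else some ((p : ℚ) / (q : ℚ))

namespace FareySep

/-- Numerator coordinate of a vertex (`∞` has coordinates `(1,0)`). -/
def nm : Option ℚ → ℤ
  | none => 1
  | some r => r.num

/-- Denominator coordinate of a vertex. -/
def dn : Option ℚ → ℤ
  | none => 0
  | some r => (r.den : ℤ)

@[simp] lemma nm_none : nm none = 1 := rfl
@[simp] lemma dn_none : dn none = 0 := rfl
@[simp] lemma nm_some (r : ℚ) : nm (some r) = r.num := rfl
@[simp] lemma dn_some (r : ℚ) : dn (some r) = (r.den : ℤ) := rfl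

/-- The determinant pairing of two vertices. -/
def dt (x y : Option ℚ) : ℤ := nm x * dn y - nm y * dn x

lemma dt_self (x : Option ℚ) : dt x x = 0 := by simp [dt]

/-- Vanishing determinant means equal vertices. -/
lemma dt_eq_zero : ∀ {x y : Option ℚ}, dt x y = 0 → x = y := by
  rintro (_ | p) (_ | r) h
  · rfl
  · exfalso
    have hr := r.pos
    simp only [dt, nm_none, dn_none, nm_some, dn_some] at h
    omega
  · exfalso
    have hp := p.pos
    simp only [dt, nm_none, dn_none, nm_some, dn_some] at h
    omega
  · simp only [dt, nm_some, dn_some] at h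
    have hq : (p.num : ℚ) * (r.den : ℚ) = (r.num : ℚ) * (p.den : ℚ) := by
      exact_mod_cast (by omega : p.num * (r.den : ℤ) = r.num * (p.den : ℤ))
    have hpd : ((p.den : ℚ)) ≠ 0 := by exact_mod_cast p.den_nz
    have hrd : ((r.den : ℚ)) ≠ 0 := by exact_mod_cast r.den_nz
    have h2 : (p.num : ℚ) / (p.den : ℚ) = (r.num : ℚ) / (r.den : ℚ) :=
      (div_eq_div_iff hpd hrd).mpr hq
    rw [Rat.num_div_den, Rat.num_div_den] at h2
    exact congrArg some h2

/-- Adjacent vertices have determinant `±1`. -/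
lemma adj_dt : ∀ {x y : Option ℚ}, fareyGraph.Adj x y → (dt x y).natAbs = 1 := by
  rintro (_ | p) (_ | r) h
  · exact h.elim
  · have h' : r.den = 1 := h
    simp [dt, h']
  · have h' : p.den = 1 := h
    simp [dt, h']
  · have h' : p ≠ r ∧ (p.num * (r.den : ℤ) - r.num * (p.den : ℤ)).natAbs = 1 := h
    simpa [dt] using h'.2

lemma aux_sign {a1 b1 a2 b2 : ℤ}
    (h : a1 * b2 - b1 * a2 = 1 ∨ a1 * b2 - b1 * a2 = -1)
    (hp : 0 < a1 * b1) (hn : a2 * b2 < 0) : False := by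
  have hcd : (a1 * b2) * (b1 * a2) < 0 := by
    have he : (a1 * b2) * (b1 * a2) = (a1 * b1) * (a2 * b2) := by ring
    rw [he]; exact mul_neg_of_pos_of_neg hp hn
  rcases mul_neg_iff.mp hcd with ⟨h1, h2⟩ | ⟨h1, h2⟩ <;> omega

/-- Adjacency step preserves the side of the edge `uv`. -/
lemma step {u v x y : Option ℚ} (hd : (dt u v).natAbs = 1)
    (hxy : (dt x y).natAbs = 1)
    (hx1 : x ≠ u) (hx2 : x ≠ v) (hy1 : y ≠ u) (hy2 : y ≠ v) :
    0 < dt x u * dt x v ↔ 0 < dt y u * dt y v := by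
  have A1 : dt x u ≠ 0 := fun h => hx1 (dt_eq_zero h)
  have B1 : dt x v ≠ 0 := fun h => hx2 (dt_eq_zero h)
  have A2 : dt y u ≠ 0 := fun h => hy1 (dt_eq_zero h)
  have B2 : dt y v ≠ 0 := fun h => hy2 (dt_eq_zero h)
  have P : dt x u * dt y v - dt x v * dt y u = dt x y * dt u v := by
    simp only [dt]; ring
  have hP : dt x u * dt y v - dt x v * dt y u = 1 ∨
      dt x u * dt y v - dt x v * dt y u = -1 := by
    rw [P]
    have : (dt x y * dt u v).natAbs = 1 := by rw [Int.natAbs_mul, hxy, hd]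
    omega
  have hP' : dt y u * dt x v - dt y v * dt x u = 1 ∨
      dt y u * dt x v - dt y v * dt x u = -1 := by
    have he : dt y u * dt x v - dt y v * dt x u
        = -(dt x u * dt y v - dt x v * dt y u) := by ring
    rcases hP with h | h <;> rw [he, h] <;> simp
  constructor <;> intro h
  · by_contra h2
    exact aux_sign hP h (lt_of_le_of_ne (not_lt.mp h2) (mul_ne_zero A2 B2))
  · by_contra h2
    exact aux_sign hP' h (lt_of_le_of_ne (not_lt.mp h2) (mul_ne_zero A1 B1))

/-- The sign of `dt · u * dt · v` is constant along walks avoiding `u` and `v`. -/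
lemma walk_sign {u v : Option ℚ} (hd : (dt u v).natAbs = 1) :
    ∀ {a b : Option ℚ} (w : fareyGraph.Walk a b),
      (∀ z ∈ w.support, z ≠ u ∧ z ≠ v) →
      (0 < dt a u * dt a v ↔ 0 < dt b u * dt b v) := by
  intro a b w
  induction w with
  | nil => intro _; rfl
  | @cons a c b h p ih =>
    intro hs
    have ha : a ≠ u ∧ a ≠ v := hs a (by simp)
    have hc : c ≠ u ∧ c ≠ v := hs c (by simp)
    have h1 := step hd (adj_dt h) ha.1 ha.2 hc.1 hc.2
    have h2 := ih (fun z hz => hs z (by simp [hz]))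
    exact h1.trans h2

/-- Realize a coprime pair of coordinates by a vertex, up to a global sign. -/
lemma exists_vertex (m n : ℤ) (hc : IsCoprime m n) :
    ∃ x : Option ℚ, (nm x = m ∧ dn x = n) ∨ (nm x = -m ∧ dn x = -n) := by
  rcases lt_trichotomy n 0 with h | h | h
  · refine ⟨some (((-m : ℤ) : ℚ) / ((-n : ℤ) : ℚ)), Or.inr ⟨?_, ?_⟩⟩
    · have hcop : Nat.Coprime (-m).natAbs (-n).natAbs := by
        rw [Int.natAbs_neg, Int.natAbs_neg]
        exact Int.isCoprime_iff_nat_coprime.mp hc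
      simpa using Rat.num_div_eq_of_coprime (by omega : (0:ℤ) < -n) hcop
    · have hcop : Nat.Coprime (-m).natAbs (-n).natAbs := by
        rw [Int.natAbs_neg, Int.natAbs_neg]
        exact Int.isCoprime_iff_nat_coprime.mp hc
      simpa using Rat.den_div_eq_of_coprime (by omega : (0:ℤ) < -n) hcop
  · subst h
    have hm : IsUnit m := isCoprime_zero_right.mp hc
    rcases Int.isUnit_iff.mp hm with rfl | rfl
    · exact ⟨none, Or.inl ⟨rfl, rfl⟩⟩
    · exact ⟨none, Or.inr ⟨rfl, rfl⟩⟩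
  · refine ⟨some ((m : ℚ) / ((n : ℤ) : ℚ)), Or.inl ⟨?_, ?_⟩⟩
    · have hcop : Nat.Coprime m.natAbs n.natAbs := Int.isCoprime_iff_nat_coprime.mp hc
      simpa using Rat.num_div_eq_of_coprime h hcop
    · have hcop : Nat.Coprime m.natAbs n.natAbs := Int.isCoprime_iff_nat_coprime.mp hc
      simpa using Rat.den_div_eq_of_coprime h hcop

lemma sg_repr {x : Option ℚ} {m n : ℤ} (u v : Option ℚ)
    (h : (nm x = m ∧ dn x = n) ∨ (nm x = -m ∧ dn x = -n)) :
    dt x u * dt x v = (m * dn u - nm u * n) * (m * dn v - nm v * n) := by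
  rcases h with ⟨h1, h2⟩ | ⟨h1, h2⟩ <;> simp only [dt, h1, h2] <;> ring

end FareySep

open FareySep in
/-- Every edge of the Farey graph separates it: for adjacent vertices `u` and `v`, the
subgraph induced on the complement of `{u, v}` is disconnected, i.e. there are vertices
`a, b ∉ ({u, v} : Set (Option ℚ))` such that every path in the Farey graph from `a` to `b`
passes through `u` or `v`. -/
theorem fareyGraph_edge_separates (u v : Option ℚ) (huv : fareyGraph.Adj u v) :
    ∃ a b : Option ℚ, a ∉ ({u, v} : Set (Option ℚ)) ∧ b ∉ ({u, v} : Set (Option ℚ)) ∧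
      ∀ w : fareyGraph.Walk a b, u ∈ w.support ∨ v ∈ w.support := by
  have hduv : (dt u v).natAbs = 1 := adj_dt huv
  have hD : dt u v = 1 ∨ dt u v = -1 := by omega
  -- the mediant vertex
  have hcA : IsCoprime (nm u + nm v) (dn u + dn v) := by
    have hcomb : dn v * (nm u + nm v) + (-(nm v)) * (dn u + dn v) = dt u v := by
      simp only [dt]; ring
    rcases hD with h | h
    · exact ⟨dn v, -(nm v), by rw [hcomb, h]⟩
    · exact ⟨-(dn v), nm v, by linarith [hcomb]⟩
  obtain ⟨A, hA⟩ := exists_vertex _ _ hcA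
  have sA : dt A u * dt A v = -1 := by
    rw [sg_repr u v hA]
    have he : ((nm u + nm v) * dn u - nm u * (dn u + dn v)) *
        ((nm u + nm v) * dn v - nm v * (dn u + dn v)) = -(dt u v * dt u v) := by
      simp only [dt]; ring
    rw [he]
    rcases hD with h | h <;> rw [h] <;> norm_num
  -- the anti-mediant vertex
  have hcB : IsCoprime (nm u - nm v) (dn u - dn v) := by
    have hcomb : dn v * (nm u - nm v) + (-(nm v)) * (dn u - dn v) = dt u v := by
      simp only [dt]; ring
    rcases hD with h | h
    · exact ⟨dn v, -(nm v), by rw [hcomb, h]⟩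
    · exact ⟨-(dn v), nm v, by linarith [hcomb]⟩
  obtain ⟨B, hB⟩ := exists_vertex _ _ hcB
  have sB : dt B u * dt B v = 1 := by
    rw [sg_repr u v hB]
    have he : ((nm u - nm v) * dn u - nm u * (dn u - dn v)) *
        ((nm u - nm v) * dn v - nm v * (dn u - dn v)) = dt u v * dt u v := by
      simp only [dt]; ring
    rw [he]
    rcases hD with h | h <;> rw [h] <;> norm_num
  have hAu : A ≠ u := by
    intro h; rw [h, dt_self, zero_mul] at sA; omega
  have hAv : A ≠ v := by
    intro h; rw [h, dt_self, mul_zero] at sA; omega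
  have hBu : B ≠ u := by
    intro h; rw [h, dt_self, zero_mul] at sB; omega
  have hBv : B ≠ v := by
    intro h; rw [h, dt_self, mul_zero] at sB; omega
  refine ⟨A, B, ?_, ?_, ?_⟩
  · simp only [Set.mem_insert_iff, Set.mem_singleton_iff]
    push_neg
    exact ⟨hAu, hAv⟩
  · simp only [Set.mem_insert_iff, Set.mem_singleton_iff]
    push_neg
    exact ⟨hBu, hBv⟩
  · intro w
    by_contra hcon
    push_neg at hcon
    obtain ⟨hu, hv⟩ := hcon
    have := walk_sign hduv w (fun z hz =>
      ⟨fun h => hu (h ▸ hz), fun h => hv (h ▸ hz)⟩)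
    rw [sA, sB] at this
    exact absurd (this.mpr one_pos) (by norm_num)
end

section
/- Any two adjacent vertices u = p/q and v = r/s of the Farey graph (written in lowest terms) have exactly two common neighbors in 𝓕, namely the vertices represented, up to simultaneous sign change, by the integer pairs (p + r, q + s) and (p − r, q − s). Consequently, every edge of the Farey graph is contained in exactly two 3-cycles. -/
lemma rat_repr (a b : ℤ) (hb : 0 < b) (hco : Int.gcd a b = 1) :
    ((a:ℚ)/b).num = a ∧ (((a:ℚ)/b).den : ℤ) = b := by
  have hb' : (b.toNat : ℤ) = b := Int.toNat_of_nonneg hb.le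
  have h0 : b.toNat ≠ 0 := by omega
  have hco' : a.natAbs.Coprime b.toNat := by
    have hbb : b.natAbs = b.toNat := by omega
    unfold Int.gcd at hco; rw [hbb] at hco; exact hco
  have heq : ((a:ℚ)/b) = Rat.mk' a b.toNat h0 hco' := by
    rw [Rat.mk_eq_divInt, Rat.divInt_eq_div, hb']
  rw [heq]
  exact ⟨rfl, hb'⟩

lemma fareyVertex_neg (a b : ℤ) : fareyVertex (-a) (-b) = fareyVertex a b := by
  unfold fareyVertex
  by_cases hb : b = 0
  · simp [hb]
  · rw [if_neg hb, if_neg (by omega : ¬ -b = 0)]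
    push_cast
    rw [neg_div_neg_eq]

lemma farey_adj_iff (a b c d : ℤ) (hb : 0 ≤ b) (hd : 0 ≤ d)
    (hab : Int.gcd a b = 1) (hcd : Int.gcd c d = 1) :
    fareyGraph.Adj (fareyVertex a b) (fareyVertex c d) ↔ (a*d - c*b).natAbs = 1 := by
  unfold fareyVertex
  by_cases hb0 : b = 0
  · subst hb0
    have ha1 : a.natAbs = 1 := by simpa using hab
    by_cases hd0 : d = 0
    · subst hd0
      rw [if_pos rfl, if_pos rfl]
      simp only [mul_zero, sub_zero, Int.natAbs_zero]
      exact ⟨fun h => h.elim, by omega⟩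
    · rw [if_pos rfl, if_neg hd0]
      have hd' : 0 < d := lt_of_le_of_ne hd (Ne.symm hd0)
      have hden := (rat_repr c d hd' hcd).2
      show ((c:ℚ)/d).den = 1 ↔ _
      rw [mul_zero, sub_zero, Int.natAbs_mul, ha1, one_mul]
      omega
  · have hb' : 0 < b := lt_of_le_of_ne hb (Ne.symm hb0)
    have hnum := (rat_repr a b hb' hab).1
    have hden := (rat_repr a b hb' hab).2
    by_cases hd0 : d = 0
    · subst hd0
      have hc1 : c.natAbs = 1 := by simpa using hcd
      rw [if_neg hb0, if_pos rfl]
      show ((a:ℚ)/b).den = 1 ↔ _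
      rw [mul_zero, zero_sub, Int.natAbs_neg, Int.natAbs_mul, hc1, one_mul]
      omega
    · have hd' : 0 < d := lt_of_le_of_ne hd (Ne.symm hd0)
      have hnum2 := (rat_repr c d hd' hcd).1
      have hden2 := (rat_repr c d hd' hcd).2
      rw [if_neg hb0, if_neg hd0]
      show ((a:ℚ)/b ≠ (c:ℚ)/d ∧ _) ↔ _
      rw [hnum, hden, hnum2, hden2]
      constructor
      · exact fun h => h.2
      · intro h
        refine ⟨fun heq => ?_, h⟩
        rw [div_eq_div_iff (by exact_mod_cast hb0) (by exact_mod_cast hd0)] at heq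
        have : a * d = c * b := by exact_mod_cast heq
        omega

lemma vertex_cases (w : Option ℚ) :
    ∃ a b : ℤ, 0 ≤ b ∧ Int.gcd a b = 1 ∧ w = fareyVertex a b := by
  cases w with
  | none => exact ⟨1, 0, le_refl 0, by simp, by simp [fareyVertex]⟩
  | some x =>
      refine ⟨x.num, x.den, by positivity, ?_, ?_⟩
      · have := x.reduced
        unfold Int.gcd
        simpa using this
      · have hd : (x.den : ℤ) ≠ 0 := by exact_mod_cast x.den_nz
        unfold fareyVertex
        rw [if_neg hd]
        norm_cast
        rw [Rat.num_divInt_den]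

lemma core (p q r s a b : ℤ) (h : (p*s - r*q).natAbs = 1)
    (h1 : (a*q - p*b).natAbs = 1) (h2 : (a*s - r*b).natAbs = 1) :
    (a = p+r ∧ b = q+s) ∨ (a = -(p+r) ∧ b = -(q+s)) ∨
    (a = p-r ∧ b = q-s) ∨ (a = -(p-r) ∧ b = -(q-s)) := by
  have key1 : b * (p*s - r*q) = (a*s - r*b)*q - (a*q - p*b)*s := by ring
  have key2 : a * (p*s - r*q) = (a*s - r*b)*p - (a*q - p*b)*r := by ring
  have hD : p*s - r*q = 1 ∨ p*s - r*q = -1 := by omega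
  have hE1 : a*q - p*b = 1 ∨ a*q - p*b = -1 := by omega
  have hE2 : a*s - r*b = 1 ∨ a*s - r*b = -1 := by omega
  rcases hD with hD | hD <;> rcases hE1 with hE1 | hE1 <;> rcases hE2 with hE2 | hE2 <;>
    rw [hD, hE1, hE2] at key1 key2 <;> [skip; skip; skip; skip; skip; skip; skip; skip] <;>
    omega

lemma key (p q r s : ℤ) (hq : 0 ≤ q) (hs : 0 ≤ s)
    (hpq : Int.gcd p q = 1) (hrs : Int.gcd r s = 1)
    (hadj : (p * s - r * q).natAbs = 1) :
    {w : Option ℚ | fareyGraph.Adj w (fareyVertex p q) ∧ fareyGraph.Adj w (fareyVertex r s)}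
        = {fareyVertex (p + r) (q + s), fareyVertex (p - r) (q - s)} ∧
      fareyVertex (p + r) (q + s) ≠ fareyVertex (p - r) (q - s) := by
  have hD : p*s - r*q = 1 ∨ p*s - r*q = -1 := by omega
  have hco1 : Int.gcd (p+r) (q+s) = 1 := by
    rw [← Int.isCoprime_iff_gcd_eq_one]
    rcases hD with h | h
    · exact ⟨s, -r, by linear_combination h⟩
    · exact ⟨-s, r, by linear_combination -h⟩
  have hco2 : Int.gcd (p-r) (q-s) = 1 := by
    rw [← Int.isCoprime_iff_gcd_eq_one]
    rcases hD with h | h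
    · exact ⟨s, -r, by linear_combination h⟩
    · exact ⟨-s, r, by linear_combination -h⟩
  have hco2' : Int.gcd (r-p) (s-q) = 1 := by
    rw [← Int.isCoprime_iff_gcd_eq_one]
    rcases hD with h | h
    · exact ⟨-s, r, by linear_combination h⟩
    · exact ⟨s, -r, by linear_combination -h⟩
  constructor
  · ext w
    simp only [Set.mem_setOf_eq, Set.mem_insert_iff, Set.mem_singleton_iff]
    constructor
    · rintro ⟨h1, h2⟩
      obtain ⟨a, b, hb, hab, hw⟩ := vertex_cases w
      subst hw
      rw [farey_adj_iff a b p q hb hq hab hpq] at h1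
      rw [farey_adj_iff a b r s hb hs hab hrs] at h2
      rcases core p q r s a b hadj h1 h2 with ⟨ha,hb'⟩|⟨ha,hb'⟩|⟨ha,hb'⟩|⟨ha,hb'⟩ <;>
        subst ha <;> subst hb'
      · left; rfl
      · left; exact fareyVertex_neg _ _
      · right; rfl
      · right; exact fareyVertex_neg _ _
    · rintro (rfl | rfl)
      · constructor
        · rw [farey_adj_iff _ _ _ _ (by omega) hq hco1 hpq]
          have : (p+r)*q - p*(q+s) = -(p*s - r*q) := by ring
          omega
        · rw [farey_adj_iff _ _ _ _ (by omega) hs hco1 hrs]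
          have : (p+r)*s - r*(q+s) = p*s - r*q := by ring
          omega
      · rcases le_or_gt 0 (q - s) with hqs | hqs
        · constructor
          · rw [farey_adj_iff _ _ _ _ hqs hq hco2 hpq]
            have : (p-r)*q - p*(q-s) = p*s - r*q := by ring
            omega
          · rw [farey_adj_iff _ _ _ _ hqs hs hco2 hrs]
            have : (p-r)*s - r*(q-s) = p*s - r*q := by ring
            omega
        · have e : fareyVertex (p-r) (q-s) = fareyVertex (r-p) (s-q) := by
            rw [← fareyVertex_neg (r-p) (s-q)]; congr 1 <;> ring
          rw [e]
          constructor
          · rw [farey_adj_iff _ _ _ _ (by omega) hq hco2' hpq]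
            have : (r-p)*q - p*(s-q) = -(p*s - r*q) := by ring
            omega
          · rw [farey_adj_iff _ _ _ _ (by omega) hs hco2' hrs]
            have : (r-p)*s - r*(s-q) = -(p*s - r*q) := by ring
            omega
  · intro hcontra
    unfold fareyVertex at hcontra
    by_cases h1 : q + s = 0 <;> by_cases h2 : q - s = 0
    · have hq0 : q = 0 := by omega
      have hs0 : s = 0 := by omega
      subst hq0; subst hs0
      simp at hadj
    · rw [if_pos h1, if_neg h2] at hcontra
      cases hcontra
    · rw [if_neg h1, if_pos h2] at hcontra
      cases hcontra
    · rw [if_neg h1, if_neg h2] at hcontra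
      have heq : ((p+r : ℤ):ℚ)/((q+s:ℤ):ℚ) = ((p-r:ℤ):ℚ)/((q-s:ℤ):ℚ) := by
        have := Option.some.inj hcontra
        push_cast at this ⊢
        exact this
      rw [div_eq_div_iff (by exact_mod_cast h1) (by exact_mod_cast h2)] at heq
      have h3 : (p+r)*(q-s) = (p-r)*(q+s) := by exact_mod_cast heq
      have h4 : (p+r)*(q-s) - (p-r)*(q+s) = -2*(p*s - r*q) := by ring
      omega

/-- Adjacent vertices `u = p/q` and `v = r/s` of the Farey graph (in lowest terms) have
exactly two common neighbors, namely the vertices represented (up to simultaneous sign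
change, which `fareyVertex` absorbs) by `(p + r, q + s)` and `(p - r, q - s)`.
Consequently, every edge of the Farey graph is contained in exactly two 3-cycles
(sets of three pairwise adjacent vertices). -/
theorem fareyGraph_common_neighbors (p q r s : ℤ) (hq : 0 ≤ q) (hs : 0 ≤ s)
    (hpq : Int.gcd p q = 1) (hrs : Int.gcd r s = 1)
    (hadj : (p * s - r * q).natAbs = 1) :
    ({w : Option ℚ | fareyGraph.Adj w (fareyVertex p q) ∧ fareyGraph.Adj w (fareyVertex r s)}
        = {fareyVertex (p + r) (q + s), fareyVertex (p - r) (q - s)} ∧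
      fareyVertex (p + r) (q + s) ≠ fareyVertex (p - r) (q - s)) ∧
    ∀ u v : Option ℚ, fareyGraph.Adj u v →
      {T : Finset (Option ℚ) |
        T.card = 3 ∧ (∀ x ∈ T, ∀ y ∈ T, x ≠ y → fareyGraph.Adj x y) ∧ u ∈ T ∧ v ∈ T}.ncard
        = 2 := by
  refine ⟨key p q r s hq hs hpq hrs hadj, ?_⟩
  intro u v huv
  obtain ⟨a, b, hb, hab, hu⟩ := vertex_cases u
  obtain ⟨c, d, hd, hcd, hv⟩ := vertex_cases v
  subst hu; subst hv
  have hadj' : (a*d - c*b).natAbs = 1 := (farey_adj_iff a b c d hb hd hab hcd).mp huv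
  obtain ⟨hset, hne⟩ := key a b c d hb hd hab hcd hadj'
  set u := fareyVertex a b with hudef
  set v := fareyVertex c d with hvdef
  set w1 := fareyVertex (a+c) (b+d) with hw1def
  set w2 := fareyVertex (a-c) (b-d) with hw2def
  have hw1S : fareyGraph.Adj w1 u ∧ fareyGraph.Adj w1 v := by
    have : w1 ∈ {w : Option ℚ | fareyGraph.Adj w u ∧ fareyGraph.Adj w v} := by
      rw [hset]; left; rfl
    exact this
  have hw2S : fareyGraph.Adj w2 u ∧ fareyGraph.Adj w2 v := by
    have : w2 ∈ {w : Option ℚ | fareyGraph.Adj w u ∧ fareyGraph.Adj w v} := by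
      rw [hset]; right; rfl
    exact this
  have huvne : u ≠ v := huv.ne
  have hw1u : w1 ≠ u := hw1S.1.ne
  have hw1v : w1 ≠ v := hw1S.2.ne
  have hw2u : w2 ≠ u := hw2S.1.ne
  have hw2v : w2 ≠ v := hw2S.2.ne
  have main : {T : Finset (Option ℚ) |
        T.card = 3 ∧ (∀ x ∈ T, ∀ y ∈ T, x ≠ y → fareyGraph.Adj x y) ∧ u ∈ T ∧ v ∈ T}
      = {insert u (insert v {w1}), insert u (insert v {w2})} := by
    ext T
    simp only [Set.mem_setOf_eq, Set.mem_insert_iff, Set.mem_singleton_iff]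
    constructor
    · rintro ⟨hcard, hadjT, huT, hvT⟩
      obtain ⟨w, hwT, hwuv⟩ : ∃ w ∈ T, w ∉ ({u, v} : Finset (Option ℚ)) := by
        by_contra hc
        push_neg at hc
        have hsub : T ⊆ {u, v} := hc
        have := Finset.card_le_card hsub
        have h2 : ({u, v} : Finset (Option ℚ)).card ≤ 2 := Finset.card_insert_le _ _ |>.trans (by simp)
        omega
      have hwu : w ≠ u := by intro h; subst h; simp at hwuv
      have hwv : w ≠ v := by intro h; subst h; simp at hwuv
      have hadjwu : fareyGraph.Adj w u := hadjT w hwT u huT hwu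
      have hadjwv : fareyGraph.Adj w v := hadjT w hwT v hvT hwv
      have hwS : w ∈ {x : Option ℚ | fareyGraph.Adj x u ∧ fareyGraph.Adj x v} :=
        ⟨hadjwu, hadjwv⟩
      rw [hset] at hwS
      have hTeq : ∀ x, x = w1 ∨ x = w2 → x ≠ u → x ≠ v →
          w = x → T = insert u (insert v {x}) := by
        intro x _ hxu hxv hwx
        subst hwx
        have hsub3 : insert u (insert v ({w} : Finset (Option ℚ))) ⊆ T := by
          intro y hy
          simp only [Finset.mem_insert, Finset.mem_singleton] at hy
          rcases hy with rfl | rfl | rfl <;> assumption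
        have hc3 : (insert u (insert v ({w} : Finset (Option ℚ)))).card = 3 := by
          rw [Finset.card_insert_of_notMem (by simp [huvne, Ne.symm hxu]),
            Finset.card_insert_of_notMem (by simp [Ne.symm hxv]), Finset.card_singleton]
        exact (Finset.eq_of_subset_of_card_le hsub3 (by omega)).symm
      rcases hwS with hww | hww
      · left; exact hTeq w1 (Or.inl rfl) hw1u hw1v hww
      · right; exact hTeq w2 (Or.inr rfl) hw2u hw2v hww
    · have build : ∀ x, fareyGraph.Adj x u → fareyGraph.Adj x v →
          (insert u (insert v ({x} : Finset (Option ℚ)))).card = 3 ∧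
          (∀ y ∈ insert u (insert v ({x} : Finset (Option ℚ))),
            ∀ z ∈ insert u (insert v ({x} : Finset (Option ℚ))), y ≠ z → fareyGraph.Adj y z) ∧
          u ∈ insert u (insert v ({x} : Finset (Option ℚ))) ∧
          v ∈ insert u (insert v ({x} : Finset (Option ℚ))) := by
        intro x hxu hxv
        refine ⟨?_, ?_, by simp, by simp⟩
        · rw [Finset.card_insert_of_notMem (by simp [huvne, Ne.symm hxu.ne]),
            Finset.card_insert_of_notMem (by simp [Ne.symm hxv.ne]), Finset.card_singleton]
        · intro y hy z hz hyz
          simp only [Finset.mem_insert, Finset.mem_singleton] at hy hz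
          rcases hy with rfl | rfl | rfl <;> rcases hz with rfl | rfl | rfl <;>
            first
              | exact absurd rfl hyz
              | exact huv
              | exact huv.symm
              | exact hxu
              | exact hxv
              | exact hxu.symm
              | exact hxv.symm
      rintro (rfl | rfl)
      · exact build w1 hw1S.1 hw1S.2
      · exact build w2 hw2S.1 hw2S.2
  rw [main]
  apply Set.ncard_pair
  intro hcontra
  have : w1 ∈ insert u (insert v ({w2} : Finset (Option ℚ))) := by
    rw [← hcontra]; simp
  simp only [Finset.mem_insert, Finset.mem_singleton] at this
  rcases this with h | h | h
  · exact hw1u h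
  · exact hw1v h
  · exact hne h
end

section
/- For any two vertices μ and ν of the Farey graph, there exists a finite sequence Δ₀, Δ₁, …, Δ_n of 3-cycles of 𝓕 such that μ is a vertex of Δ₀, ν is a vertex of Δ_n, and for each index i < n the triangles Δ_i and Δ_{i+1} share an edge, i.e., their vertex sets have exactly two vertices in common and these two vertices are adjacent in 𝓕. -/
-- helpers
def denO : Option ℚ → ℕ
  | none => 0
  | some r => r.den

lemma ne_of_det {x y : ℚ} (h : (x.num * (y.den:ℤ) - y.num * (x.den:ℤ)).natAbs = 1) : x ≠ y := by
  rintro rfl; simp at h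

lemma adj_some {x y : ℚ} (h : (x.num * (y.den:ℤ) - y.num * (x.den:ℤ)).natAbs = 1) :
    fareyGraph.Adj (some x) (some y) := ⟨ne_of_det h, h⟩

lemma adj_none_int (k : ℤ) : fareyGraph.Adj none (some (k:ℚ)) := by
  have : fareyAdj none (some (k:ℚ)) := by simp [fareyAdj]
  exact this

lemma adj_int_succ (k : ℤ) : fareyGraph.Adj (some (k:ℚ)) (some ((k:ℚ)+1)) := by
  have h1 : ((k:ℚ)+1) = (((k+1 : ℤ)):ℚ) := by push_cast; ring
  rw [h1]
  apply adj_some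
  rw [Rat.num_intCast, Rat.den_intCast, Rat.num_intCast, Rat.den_intCast]
  simp

def triOK (T : Finset (Option ℚ)) : Prop :=
  T.card = 3 ∧ ∀ x ∈ T, ∀ y ∈ T, x ≠ y → fareyGraph.Adj x y

def shareOK (A B : Finset (Option ℚ)) : Prop :=
  (A ∩ B).card = 2 ∧ ∀ x ∈ A ∩ B, ∀ y ∈ A ∩ B, x ≠ y → fareyGraph.Adj x y

def good (Δ : ℕ → Finset (Option ℚ)) (n : ℕ) : Prop :=
  (∀ i ≤ n, triOK (Δ i)) ∧ ∀ i < n, shareOK (Δ i) (Δ (i+1))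

lemma triOK_of {a b c : Option ℚ} (hab : fareyGraph.Adj a b) (hac : fareyGraph.Adj a c)
    (hbc : fareyGraph.Adj b c) : triOK {a, b, c} := by
  have h1 : a ≠ b := hab.ne
  have h2 : a ≠ c := hac.ne
  have h3 : b ≠ c := hbc.ne
  constructor
  · rw [Finset.card_insert_of_notMem (by simp [h1, h2]),
      Finset.card_insert_of_notMem (by simp [h3]), Finset.card_singleton]
  · intro x hx y hy hxy
    simp only [Finset.mem_insert, Finset.mem_singleton] at hx hy
    rcases hx with rfl | rfl | rfl <;> rcases hy with rfl | rfl | rfl <;>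
      first
        | exact absurd rfl hxy
        | assumption
        | exact hab.symm
        | exact hac.symm
        | exact hbc.symm

lemma shareOK_of {A B : Finset (Option ℚ)} {a b : Option ℚ} (h : A ∩ B = {a, b})
    (hadj : fareyGraph.Adj a b) : shareOK A B := by
  refine ⟨by rw [h]; exact Finset.card_pair hadj.ne, ?_⟩
  intro x hx y hy hxy
  rw [h] at hx hy
  simp only [Finset.mem_insert, Finset.mem_singleton] at hx hy
  rcases hx with rfl | rfl <;> rcases hy with rfl | rfl <;>
    first
      | exact absurd rfl hxy
      | assumption
      | exact hadj.symm

lemma shareOK_symm {A B : Finset (Option ℚ)} (h : shareOK A B) : shareOK B A := by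
  obtain ⟨h1, h2⟩ := h
  rw [Finset.inter_comm] at h1 h2
  exact ⟨h1, h2⟩

def baseTri (k : ℤ) : Finset (Option ℚ) := {none, some (k:ℚ), some ((k:ℚ)+1)}

lemma baseTri_triOK (k : ℤ) : triOK (baseTri k) := by
  have h1 : ((k:ℚ)+1) = (((k+1:ℤ)):ℚ) := by push_cast; ring
  refine triOK_of (adj_none_int k) ?_ (adj_int_succ k)
  rw [h1]; exact adj_none_int (k+1)

lemma good_reverse {Δ : ℕ → Finset (Option ℚ)} {n : ℕ} (h : good Δ n) :
    good (fun i => Δ (n - i)) n := by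
  constructor
  · intro i hi; exact h.1 (n - i) (by omega)
  · intro i hi
    have he : n - i = (n - (i+1)) + 1 := by omega
    have := shareOK_symm (h.2 (n - (i+1)) (by omega))
    simpa only [← he] using this

lemma good_concat {Δa Δb : ℕ → Finset (Option ℚ)} {na nb : ℕ}
    (ha : good Δa na) (hb : good Δb nb) (hj : Δa na = Δb 0) :
    ∃ Δ : ℕ → Finset (Option ℚ), good Δ (na + nb) ∧ Δ 0 = Δa 0 ∧ Δ (na + nb) = Δb nb := by
  refine ⟨fun i => if i ≤ na then Δa i else Δb (i - na), ⟨?_, ?_⟩, ?_, ?_⟩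
  · intro i hi
    by_cases h : i ≤ na
    · simpa [h] using ha.1 i h
    · simpa [h] using hb.1 (i - na) (by omega)
  · intro i hi
    rcases lt_trichotomy i na with h | h | h
    · have h1 : i ≤ na := by omega
      have h2 : i + 1 ≤ na := by omega
      simpa [h1, h2] using ha.2 i h
    · subst h
      have h2 : ¬ (i + 1 ≤ i) := by omega
      have hnb : 0 < nb := by omega
      simp only [le_refl, if_pos, h2, if_neg, not_false_iff, Nat.add_sub_cancel_left, hj]
      exact hb.2 0 hnb
    · have h1 : ¬ (i ≤ na) := by omega
      have h2 : ¬ (i + 1 ≤ na) := by omega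
      have h3 : i + 1 - na = (i - na) + 1 := by omega
      simp only [h1, h2, if_neg, not_false_iff, h3]
      exact hb.2 (i - na) (by omega)
  · simp
  · by_cases h : nb = 0
    · subst h; simp [hj]
    · have h1 : ¬ (na + nb ≤ na) := by omega
      simp [h1]

lemma baseTri_eq (m : ℤ) : baseTri m = {none, some (m:ℚ), some ((m+1:ℤ):ℚ)} := by
  unfold baseTri
  rw [show ((m:ℚ)+1) = ((m+1:ℤ):ℚ) by push_cast; ring]

lemma baseTri_share (m : ℤ) : shareOK (baseTri m) (baseTri (m+1)) := by
  have hmm : ((m:ℚ)) ≠ ((m+1:ℤ):ℚ) := by exact_mod_cast (by omega : m ≠ m+1)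
  have h02 : ((m:ℚ)) ≠ ((m+1+1:ℤ):ℚ) := by exact_mod_cast (by omega : m ≠ m+1+1)
  have h12 : ((m+1:ℤ):ℚ) ≠ ((m+1+1:ℤ):ℚ) := by exact_mod_cast (by omega : m+1 ≠ m+1+1)
  apply shareOK_of (a := none) (b := some ((m+1:ℤ):ℚ))
  · rw [baseTri_eq, baseTri_eq]
    ext z
    simp only [Finset.mem_inter, Finset.mem_insert, Finset.mem_singleton]
    constructor
    · rintro ⟨rfl | rfl | rfl, h2⟩
      · exact Or.inl rfl
      · rcases h2 with h | h | h
        · exact absurd h (by simp)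
        · exact absurd (Option.some.inj h) hmm
        · exact absurd (Option.some.inj h) h02
      · exact Or.inr rfl
    · rintro (rfl | rfl)
      · exact ⟨Or.inl rfl, Or.inl rfl⟩
      · exact ⟨Or.inr (Or.inr rfl), Or.inr (Or.inl rfl)⟩
  · exact adj_none_int (m+1)

lemma pivot_up (k : ℤ) (d : ℕ) :
    ∃ Δ : ℕ → Finset (Option ℚ), good Δ d ∧ Δ 0 = baseTri k ∧ Δ d = baseTri (k + d) := by
  refine ⟨fun i => baseTri (k + i), ⟨fun i _ => baseTri_triOK _, ?_⟩, by simp, by simp⟩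
  intro i _
  show shareOK (baseTri (k + i)) (baseTri (k + (i+1:ℕ)))
  have h : (k + ((i+1:ℕ):ℤ)) = (k + i) + 1 := by push_cast; ring
  rw [h]
  exact baseTri_share _

lemma pivot_any (k m : ℤ) :
    ∃ (n : ℕ) (Δ : ℕ → Finset (Option ℚ)), good Δ n ∧ Δ 0 = baseTri k ∧ Δ n = baseTri m := by
  rcases le_total k m with h | h
  · obtain ⟨Δ, hg, h0, hn⟩ := pivot_up k (m - k).toNat
    refine ⟨(m-k).toNat, Δ, hg, h0, ?_⟩
    rw [hn]; congr 1; omega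
  · obtain ⟨Δ, hg, h0, hn⟩ := pivot_up m (k - m).toNat
    refine ⟨(k-m).toNat, fun i => Δ ((k-m).toNat - i), good_reverse hg, ?_, by simpa using h0⟩
    simp only [Nat.sub_zero]
    rw [hn]; congr 1; omega

lemma exists_neighbor (μ : Option ℚ) : ∃ w, fareyGraph.Adj μ w := by
  match μ with
  | none =>
    refine ⟨some ((0:ℤ):ℚ), (adj_none_int 0)⟩
  | some x =>
    by_cases hd : x.den = 1
    · exact ⟨none, hd⟩
    · -- Bezout
      have hred : Nat.Coprime x.num.natAbs x.den := x.reduced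
      have hcop : IsCoprime x.num ((x.den:ℤ)) := by
        rw [Int.isCoprime_iff_gcd_eq_one]
        have : Int.gcd x.num (x.den:ℤ) = Nat.gcd x.num.natAbs x.den := by
          unfold Int.gcd; rw [Int.natAbs_natCast]
        rw [this]; exact hred
      obtain ⟨A, B, hAB⟩ := hcop
      set c : ℤ := (x.den : ℤ) with hc
      have hc1 : 1 < c := by
        have := x.den_pos
        omega
      set s : ℤ := A % c with hs
      have hs0 : 0 ≤ s := Int.emod_nonneg A (by omega)
      have hs1 : s < c := Int.emod_lt_of_pos A (by omega)
      set q0 : ℤ := A / c with hq0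
      have hq : c * q0 + s = A := Int.mul_ediv_add_emod A c
      set r : ℤ := -(B + x.num * q0) with hr
      have hkey : x.num * s - r * c = 1 := by
        rw [hr]
        linear_combination hAB + x.num * hq
      have hspos : 0 < s := by
        rcases hs0.lt_or_eq with h | h
        · exact h
        · exfalso
          have h1 : c ∣ (1:ℤ) := ⟨-r, by linear_combination -hkey - x.num * h⟩
          have := Int.le_of_dvd one_pos h1
          omega
      have hcop2 : IsCoprime r s := ⟨-c, x.num, by linear_combination hkey⟩
      have hgcd : Nat.gcd r.natAbs s.natAbs = 1 := by
        have := Int.isCoprime_iff_gcd_eq_one.mp hcop2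
        exact this
      have hsn : s.toNat ≠ 0 := by omega
      have hcop3 : r.natAbs.Coprime s.toNat := by
        have : s.natAbs = s.toNat := by omega
        rw [← this]; exact hgcd
      refine ⟨some ⟨r, s.toNat, hsn, hcop3⟩, adj_some ?_⟩
      show (x.num * ((s.toNat : ℕ) : ℤ) - r * c).natAbs = 1
      have : ((s.toNat : ℕ) : ℤ) = s := by omega
      rw [this, hkey]
      rfl

def ChainStmt (q : ℕ) : Prop :=
  ∀ u w : Option ℚ, fareyGraph.Adj u w → denO u ≤ q → denO w ≤ q →
  ∃ (n : ℕ) (Δ : ℕ → Finset (Option ℚ)) (k : ℤ) (t : Option ℚ),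
    good Δ n ∧ Δ 0 = {u, w, t} ∧ t ≠ u ∧ t ≠ w ∧ denO t ≤ q ∧ Δ n = baseTri k

lemma chain_none (q : ℕ) (y : ℚ) (hy : y.den = 1) (hq : 1 ≤ q) :
    ∃ (n : ℕ) (Δ : ℕ → Finset (Option ℚ)) (k : ℤ) (t : Option ℚ),
    good Δ n ∧ Δ 0 = {none, some y, t} ∧ t ≠ none ∧ t ≠ some y ∧ denO t ≤ q ∧ Δ n = baseTri k := by
  have hy' : ((y.num : ℤ) : ℚ) = y := (Rat.den_eq_one_iff y).mp hy
  have e2 : ((y.num + 1 : ℤ) : ℚ) = y + 1 := by push_cast; rw [hy']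
  have h0 : baseTri y.num = {none, some y, some (y + 1)} := by
    rw [baseTri_eq, e2, hy']
  refine ⟨0, fun _ => baseTri y.num, y.num, some (y + 1),
    ⟨fun i _ => baseTri_triOK _, fun i hi => absurd hi (by omega)⟩, h0, by simp, ?_, ?_, rfl⟩
  · simp only [ne_eq, Option.some.injEq]
    intro h
    have : (1:ℚ) = 0 := by linarith [h]
    norm_num at this
  · show (y + 1).den ≤ q
    rw [← e2, Rat.den_intCast]
    exact hq

lemma keyStep (q : ℕ) (IH : ∀ q' < q, ChainStmt q') (X Y : ℚ)
    (hlt : Y.den < X.den) (hXq : X.den ≤ q)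
    (hdet : (X.num * (Y.den:ℤ) - Y.num * (X.den:ℤ)).natAbs = 1) :
    ∃ (n : ℕ) (Δ : ℕ → Finset (Option ℚ)) (k : ℤ) (t : Option ℚ),
    good Δ n ∧ Δ 0 = {some X, some Y, t} ∧ t ≠ some X ∧ t ≠ some Y ∧ denO t ≤ q ∧
    Δ n = baseTri k := by
  set a : ℤ := X.num with ha
  set b : ℤ := Y.num with hb
  set c : ℕ := X.den with hc
  set d : ℕ := Y.den with hd
  have hd0 : 0 < d := Y.den_pos
  have hdc : d < c := hlt
  have hdet2 : a * (d:ℤ) - b * (c:ℤ) = 1 ∨ a * (d:ℤ) - b * (c:ℤ) = -1 := by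
    set e : ℤ := a * (d:ℤ) - b * (c:ℤ) with he
    omega
  have hcast : ((c - d : ℕ) : ℤ) = (c:ℤ) - (d:ℤ) := by omega
  have cop : (a - b).natAbs.Coprime (c - d) := by
    have hco : IsCoprime (a - b) (((c - d : ℕ)):ℤ) := by
      rw [hcast]
      rcases hdet2 with h | h
      · exact ⟨(d:ℤ), -b, by linear_combination h⟩
      · exact ⟨-(d:ℤ), b, by linear_combination -h⟩
    have h1 := Int.isCoprime_iff_gcd_eq_one.mp hco
    have h2 : Int.gcd (a - b) (((c - d : ℕ)):ℤ) = Nat.gcd (a - b).natAbs (c - d) := by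
      unfold Int.gcd; rw [Int.natAbs_natCast]
    rw [h2] at h1
    exact h1
  set t : ℚ := ⟨a - b, c - d, by omega, cop⟩ with htdef
  have htnum : t.num = a - b := rfl
  have htden : t.den = c - d := rfl
  have hXtdet : (X.num * (t.den:ℤ) - t.num * (X.den:ℤ)).natAbs = 1 := by
    have e1 : X.num * (t.den:ℤ) - t.num * (X.den:ℤ) = -(a * (d:ℤ) - b * (c:ℤ)) := by
      rw [htnum, htden, hcast, ← ha, ← hc]; ring
    rcases hdet2 with h | h <;> rw [e1, h] <;> rfl
  have hYtdet : (Y.num * (t.den:ℤ) - t.num * (Y.den:ℤ)).natAbs = 1 := by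
    have e1 : Y.num * (t.den:ℤ) - t.num * (Y.den:ℤ) = -(a * (d:ℤ) - b * (c:ℤ)) := by
      rw [htnum, htden, hcast, ← hb, ← hd]; ring
    rcases hdet2 with h | h <;> rw [e1, h] <;> rfl
  have hXt : fareyGraph.Adj (some X) (some t) := adj_some hXtdet
  have hYt : fareyGraph.Adj (some Y) (some t) := adj_some hYtdet
  have hXY : fareyGraph.Adj (some X) (some Y) := adj_some hdet
  -- recursive call on edge (Y, t), with denominator bound c - 1 < q
  have hq2 : 2 ≤ c := by omega
  obtain ⟨n', Δ', k, t'', ⟨g1, g2⟩, h0', ht1, ht2, hden'', hn'⟩ :=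
    IH (c - 1) (by omega) (some Y) (some t) hYt (by show d ≤ c - 1; omega)
      (by show t.den ≤ c - 1; rw [htden]; omega)
  have hXne'' : some X ≠ t'' := by
    intro h
    have : denO (some X) ≤ c - 1 := h ▸ hden''
    have : c ≤ c - 1 := this
    omega
  refine ⟨n' + 1, fun i => if i = 0 then ({some X, some Y, some t} : Finset (Option ℚ))
    else Δ' (i - 1), k, some t, ⟨?_, ?_⟩, by simp, hXt.ne', hYt.ne',
    (by show t.den ≤ q; rw [htden]; omega), by simpa using hn'⟩
  · intro i hi
    match i with
    | 0 => simpa using triOK_of hXY hXt hYt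
    | (j+1) => simpa using g1 j (by omega)
  · intro i hi
    match i with
    | 0 =>
      show shareOK (if (0:ℕ) = 0 then ({some X, some Y, some t} : Finset (Option ℚ)) else Δ' (0-1))
        (if (1:ℕ) = 0 then ({some X, some Y, some t} : Finset (Option ℚ)) else Δ' (1-1))
      rw [if_pos rfl, if_neg (by omega : (1:ℕ) ≠ 0)]
      apply shareOK_of (a := some Y) (b := some t) ?_ hYt
      rw [h0']
      ext z
      simp only [Finset.mem_inter, Finset.mem_insert, Finset.mem_singleton]
      constructor
      · rintro ⟨rfl | rfl | rfl, h2⟩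
        · rcases h2 with h | h | h
          · exact absurd h hXY.ne
          · exact absurd h hXt.ne
          · exact absurd h hXne''
        · exact Or.inl rfl
        · exact Or.inr rfl
      · rintro (rfl | rfl)
        · exact ⟨Or.inr (Or.inl rfl), Or.inl rfl⟩
        · exact ⟨Or.inr (Or.inr rfl), Or.inr (Or.inl rfl)⟩
    | (j+1) =>
      have e1 : j + 1 + 1 - 1 = j + 1 := by omega
      simp only [Nat.succ_ne_zero, if_neg, Nat.add_sub_cancel, e1]
      exact g2 j (by omega)

lemma chainAux (q : ℕ) : ChainStmt q := by
  induction q using Nat.strong_induction_on with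
  | _ q IH =>
  intro u w hadj hu hw
  match u, w with
  | none, none =>
    exact absurd (show fareyAdj none none from hadj) (fun h => h)
  | none, some y =>
    have hy : y.den = 1 := hadj
    have hq : 1 ≤ q := by
      have : denO (some y) = 1 := by simp [denO, hy]
      omega
    exact chain_none q y hy hq
  | some x, none =>
    have hy : x.den = 1 := hadj
    have hq : 1 ≤ q := by
      have : denO (some x) = 1 := by simp [denO, hy]
      omega
    obtain ⟨n, Δ, k, t, hg, h0, ht1, ht2, hden, hn⟩ := chain_none q x hy hq
    exact ⟨n, Δ, k, t, hg, h0.trans (Finset.insert_comm _ _ _), ht2, ht1, hden, hn⟩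
  | some x, some y =>
    obtain ⟨hne, hdet⟩ := show fareyAdj (some x) (some y) from hadj
    rcases Nat.lt_trichotomy x.den y.den with h | h | h
    · have hdet' : (y.num * (x.den:ℤ) - x.num * (y.den:ℤ)).natAbs = 1 := by
        have e : y.num * (x.den:ℤ) - x.num * (y.den:ℤ)
            = -(x.num * (y.den:ℤ) - y.num * (x.den:ℤ)) := by ring
        rw [e]
        set e2 : ℤ := x.num * (y.den:ℤ) - y.num * (x.den:ℤ)
        omega
      obtain ⟨n, Δ, k, t, hg, h0, ht1, ht2, hden, hn⟩ :=
        keyStep q IH y x h hw hdet'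
      exact ⟨n, Δ, k, t, hg, h0.trans (Finset.insert_comm _ _ _), ht2, ht1, hden, hn⟩
    · -- equal denominators, so both are integers differing by 1
      have hd1 : x.den = 1 ∧ (x.num - y.num).natAbs = 1 := by
        have e : x.num * (y.den:ℤ) - y.num * (x.den:ℤ) = (x.num - y.num) * (x.den:ℤ) := by
          rw [← h]; ring
        rw [e, Int.natAbs_mul, Int.natAbs_natCast] at hdet
        have := Nat.eq_one_of_mul_eq_one_left hdet
        have := Nat.eq_one_of_mul_eq_one_right hdet
        exact ⟨by omega, by omega⟩
      have hy1 : y.den = 1 := h ▸ hd1.1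
      have hx' : ((x.num : ℤ) : ℚ) = x := (Rat.den_eq_one_iff x).mp hd1.1
      have hy' : ((y.num : ℤ) : ℚ) = y := (Rat.den_eq_one_iff y).mp hy1
      have hq : 1 ≤ q := by
        have : denO (some x) = 1 := by simp [denO, hd1.1]
        omega
      rcases (by omega : x.num = y.num + 1 ∨ y.num = x.num + 1) with hA | hA
      · refine ⟨0, fun _ => baseTri y.num, y.num, none,
          ⟨fun i _ => baseTri_triOK _, fun i hi => absurd hi (by omega)⟩, ?_, by simp, by simp,
          by show (0:ℕ) ≤ q; omega, rfl⟩
        rw [baseTri_eq, hy', ← hA, hx']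
        ext z
        simp only [Finset.mem_insert, Finset.mem_singleton]
        tauto
      · refine ⟨0, fun _ => baseTri x.num, x.num, none,
          ⟨fun i _ => baseTri_triOK _, fun i hi => absurd hi (by omega)⟩, ?_, by simp, by simp,
          by show (0:ℕ) ≤ q; omega, rfl⟩
        rw [baseTri_eq, hx', ← hA, hy']
        ext z
        simp only [Finset.mem_insert, Finset.mem_singleton]
        tauto
    · exact keyStep q IH x y h hu hdet


/-- For any two vertices `μ` and `ν` of the Farey graph there is a finite sequence
`Δ₀, Δ₁, …, Δₙ` of 3-cycles (sets of three pairwise adjacent vertices) such that `μ` is a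
vertex of `Δ₀`, `ν` is a vertex of `Δₙ`, and consecutive triangles share an edge: their
vertex sets have exactly two vertices in common, and these two vertices are adjacent. -/
theorem fareyGraph_triangle_chain (μ ν : Option ℚ) :
    ∃ (n : ℕ) (Δ : ℕ → Finset (Option ℚ)),
      (∀ i ≤ n, (Δ i).card = 3 ∧ ∀ x ∈ Δ i, ∀ y ∈ Δ i, x ≠ y → fareyGraph.Adj x y) ∧
      μ ∈ Δ 0 ∧ ν ∈ Δ n ∧
      ∀ i < n, (Δ i ∩ Δ (i + 1)).card = 2 ∧
        ∀ x ∈ Δ i ∩ Δ (i + 1), ∀ y ∈ Δ i ∩ Δ (i + 1), x ≠ y → fareyGraph.Adj x y := by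
  obtain ⟨w1, h1⟩ := exists_neighbor μ
  obtain ⟨w2, h2⟩ := exists_neighbor ν
  obtain ⟨n1, Δ1, k1, t1, g1, h10, -, -, -, h1n⟩ :=
    chainAux (max (denO μ) (denO w1)) μ w1 h1 (le_max_left _ _) (le_max_right _ _)
  obtain ⟨n2, Δ2, k2, t2, g2, h20, -, -, -, h2n⟩ :=
    chainAux (max (denO ν) (denO w2)) ν w2 h2 (le_max_left _ _) (le_max_right _ _)
  obtain ⟨np, Δp, gp, hp0, hpn⟩ := pivot_any k1 k2
  obtain ⟨ΔA, gA, hA0, hAn⟩ := good_concat g1 gp (h1n.trans hp0.symm)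
  have g2' : good (fun i => Δ2 (n2 - i)) n2 := good_reverse g2
  have hjoin : ΔA (n1 + np) = (fun i => Δ2 (n2 - i)) 0 := by
    simp only [Nat.sub_zero]
    rw [hAn, hpn, h2n]
  obtain ⟨Δ, g, h0, hn⟩ := good_concat gA g2' hjoin
  refine ⟨n1 + np + n2, Δ, fun i hi => g.1 i hi, ?_, ?_, fun i hi => g.2 i hi⟩
  · rw [h0, hA0, h10]
    simp
  · rw [hn]
    simp only [Nat.sub_self]
    rw [h20]
    simp
end

section
/- Let F and G be connected simple graphs, each equipped with its path metric (d_F and d_G, every edge having length 1), and let φ : F → G be an injective graph homomorphism. Suppose there is a function π assigning to each vertex ν of G a set π(ν) of vertices of F such that: (i) π(φ(x)) = {x} for every vertex x of F; (ii) whenever a vertex ν of G with ν ∉ φ(F) is adjacent in G to a vertex φ(x) of φ(F), one has x ∈ π(ν); and (iii) for every path (ν₀, ν₁, …, ν_n) in G, every index i ≤ n − 1 and every δ ∈ π(ν_i), there exist j ∈ {1, 2} with i + j ≤ n and δ' ∈ π(ν_{i+j}) such that d_F(δ, δ') ≤ j. Then φ(F) is totally geodesic in G: every geodesic path in G whose two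 endpoints lie in φ(F) has all of its vertices in φ(F). -/
/-- Let `F` and `G` be connected simple graphs with their path metrics, and let
`φ : F → G` be an injective graph homomorphism.  Suppose `π` assigns to each vertex `ν`
of `G` a set `π ν` of vertices of `F` such that:
(i) `π (φ x) = {x}` for every vertex `x` of `F`;
(ii) whenever a vertex `ν ∉ φ(F)` of `G` is adjacent to a vertex `φ x`, one has `x ∈ π ν`;
(iii) for every path `(ν₀, …, νₙ)` in `G` (encoded as `w : ℕ → W` with consecutive vertices
adjacent), every index `i ≤ n - 1` and every `δ ∈ π (w i)`, there are `j ∈ {1, 2}` with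
`i + j ≤ n` and `δ' ∈ π (w (i + j))` with `dist δ δ' ≤ j`.
Then `φ(F)` is totally geodesic in `G`: every geodesic path in `G` (a path whose length
realizes the distance between its endpoints) with both endpoints in `φ(F)` has all of its
vertices in `φ(F)`. -/
theorem totally_geodesic_of_projection {V W : Type*}
    (F : SimpleGraph V) (G : SimpleGraph W) (hF : F.Connected) (hG : G.Connected)
    (φ : F →g G) (hφ : Function.Injective φ)
    (π : W → Set V)
    (h1 : ∀ x : V, π (φ x) = {x})
    (h2 : ∀ (ν : W) (x : V), ν ∉ Set.range φ → G.Adj ν (φ x) → x ∈ π ν)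
    (h3 : ∀ (n : ℕ) (w : ℕ → W), (∀ i < n, G.Adj (w i) (w (i + 1))) →
      ∀ i, i + 1 ≤ n → ∀ δ ∈ π (w i),
        ∃ j ∈ ({1, 2} : Set ℕ), i + j ≤ n ∧ ∃ δ' ∈ π (w (i + j)), F.dist δ δ' ≤ j) :
    ∀ (n : ℕ) (w : ℕ → W), (∀ i < n, G.Adj (w i) (w (i + 1))) →
      G.dist (w 0) (w n) = n →
      w 0 ∈ Set.range φ → w n ∈ Set.range φ →
      ∀ i ≤ n, w i ∈ Set.range φ := by
  classical
  -- Key marching lemma: if the endpoint of a path projects to a singleton {c},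
  -- then any δ ∈ π(u i) satisfies dist δ c ≤ m - i.
  have key : ∀ (k m : ℕ) (u : ℕ → W), (∀ i < m, G.Adj (u i) (u (i + 1))) →
      ∀ (c : V), π (u m) = {c} → ∀ i, i + k = m → ∀ δ ∈ π (u i), F.dist δ c ≤ k := by
    intro k
    induction k using Nat.strong_induction_on with
    | _ k ih =>
      intro m u hadj c hc i hik δ hδ
      rcases Nat.eq_zero_or_pos k with hk0 | hkpos
      · subst hk0
        simp only [Nat.add_zero] at hik
        subst hik
        rw [hc] at hδ
        simp only [Set.mem_singleton_iff] at hδ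
        subst hδ
        simp
      · have hi1 : i + 1 ≤ m := by omega
        obtain ⟨j, hj, hijm, δ', hδ', hdist⟩ := h3 m u hadj i hi1 δ hδ
        have hj12 : j = 1 ∨ j = 2 := by simpa using hj
        have hjk : j ≤ k := by omega
        have h2' : F.dist δ' c ≤ k - j :=
          ih (k - j) (by omega) m u hadj c hc (i + j) (by omega) δ' hδ'
        calc F.dist δ c ≤ F.dist δ δ' + F.dist δ' c := hF.dist_triangle
          _ ≤ j + (k - j) := Nat.add_le_add hdist h2'
          _ = k := by omega
  intro n w hadj hgeo h0 hn
  by_contra hcon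
  push_neg at hcon
  -- take the minimal bad index
  have hex : ∃ i, i ≤ n ∧ w i ∉ Set.range φ := hcon
  set P : ℕ → Prop := fun i => i ≤ n ∧ w i ∉ Set.range φ with hP
  have hexP : ∃ i, P i := hex
  let m := Nat.find hexP
  have hm : P m := Nat.find_spec hexP
  have hm0 : m ≠ 0 := by
    intro h
    exact hm.2 (h ▸ h0)
  have hmn : m ≠ n := by
    intro h
    exact hm.2 (h ▸ hn)
  have hmlt : m < n := lt_of_le_of_ne hm.1 hmn
  have hprev : w (m - 1) ∈ Set.range φ := by
    by_contra hbad
    have : P (m - 1) := ⟨by omega, hbad⟩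
    exact absurd (Nat.find_le this) (by omega)
  obtain ⟨x, hx⟩ := hprev
  obtain ⟨a, ha⟩ := h0
  obtain ⟨b, hb⟩ := hn
  -- x ∈ π (w m)
  have hadjm : G.Adj (w m) (φ x) := by
    have := hadj (m - 1) (by omega)
    rw [hx]
    have hms : m - 1 + 1 = m := by omega
    rw [hms] at this
    exact this.symm
  have hxπ : x ∈ π (w m) := h2 (w m) x hm.2 hadjm
  -- forward: dist x b ≤ n - m
  have hforward : F.dist x b ≤ n - m := by
    refine key (n - m) n w hadj b ?_ m (by omega) x hxπ
    rw [← hb]; exact h1 b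
  -- backward: dist x a ≤ m - 1, using reversed path
  have hback : F.dist x a ≤ m - 1 := by
    have hadj' : ∀ i < n, G.Adj (w (n - i)) (w (n - (i + 1))) := by
      intro i hi
      have := hadj (n - (i + 1)) (by omega)
      have : G.Adj (w (n - (i + 1))) (w (n - (i + 1) + 1)) := this
      have hs : n - (i + 1) + 1 = n - i := by omega
      rw [hs] at this
      exact this.symm
    have := key (m - 1) n (fun i => w (n - i)) hadj' a
      (by simp only [Nat.sub_self]; rw [← ha]; exact h1 a)
      (n - (m - 1)) (by omega) x
      (by
        show x ∈ π (w (n - (n - (m - 1))))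
        have hs : n - (n - (m - 1)) = m - 1 := by omega
        rw [hs, ← hx, h1]
        rfl)
    exact this
  -- homomorphism contracts distance: n = dist_G ≤ dist_F a b
  have hdab : (n : ℕ) ≤ F.dist a b := by
    have hr : F.Reachable a b := hF a b
    obtain ⟨p, hp⟩ := hr.exists_walk_length_eq_dist
    have : G.dist (φ a) (φ b) ≤ (p.map φ).length := SimpleGraph.dist_le _
    rw [SimpleGraph.Walk.length_map, hp] at this
    rw [← hgeo, ← ha, ← hb]
    exact this
  -- but triangle gives dist a b ≤ (m-1) + (n-m) = n - 1
  have htri : F.dist a b ≤ (m - 1) + (n - m) := by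
    calc F.dist a b ≤ F.dist a x + F.dist x b := hF.dist_triangle
      _ ≤ (m - 1) + (n - m) := by
          have : F.dist a x = F.dist x a := F.dist_comm
          omega
  omega
end
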